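/- arXiv:2109.02218 — 4 statements merged into one kernel-verified Lean document; each statement's English description precedes it below -/
import Mathlib

section
/- Let |q| > 1. The Jacobi theta function θ_q(z) = Σ_{d∈ℤ} q^{-d(d+1)/2} z^d satisfies the Jacobi triple product identity θ_q(z) = (q^{-1}; q^{-1})_∞ · (-q^{-1}z; q^{-1})_∞ · (-z^{-1}; q^{-1})_∞, where (x; p)_∞ = ∏_{i≥0} (1 - x p^i). -/
open Filter Finset Complex Topology

noncomputable section

namespace JTP

/-- Gaussian binomial coefficient (as a complex polynomial value in `p`). -/
def gb (p : ℂ) : ℕ → ℕ → ℂ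
  | _, 0 => 1
  | 0, _+1 => 0
  | n+1, k+1 => gb p n (k+1) + p ^ (n-k) * gb p n k

/-- Triangular numbers `n*(n-1)/2`. -/
def tri : ℕ → ℕ
  | 0 => 0
  | n+1 => tri n + n

lemma gb_zero_right (p : ℂ) (n : ℕ) : gb p n 0 = 1 := by cases n <;> rfl

lemma gb_succ (p : ℂ) (n k : ℕ) :
    gb p (n+1) (k+1) = gb p n (k+1) + p ^ (n-k) * gb p n k := by
  simp only [gb]

lemma gb_eq_zero (p : ℂ) : ∀ {n k : ℕ}, n < k → gb p n k = 0
  | 0, _+1, _ => rfl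
  | n+1, k+1, h => by
      rw [gb_succ, gb_eq_zero p (by omega), gb_eq_zero p (by omega)]
      ring

lemma gb_self (p : ℂ) : ∀ n, gb p n n = 1
  | 0 => rfl
  | n+1 => by rw [gb_succ, gb_eq_zero p (by omega), gb_self p n]; simp

lemma tri_succ (k : ℕ) : tri (k+1) = tri k + k := rfl

lemma tri_cast (m : ℕ) : (tri m : ℤ) * 2 = m * (m - 1) := by
  induction m with
  | zero => rfl
  | succ m ih =>
      rw [tri_succ]
      push_cast
      push_cast at ih
      nlinarith [ih]

/-- The q-binomial theorem. -/
lemma qbinom (p w : ℂ) (M : ℕ) :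
    ∏ i ∈ Finset.range M, (1 + w * p ^ i)
      = ∑ k ∈ Finset.range (M+1), gb p M k * p ^ tri k * w ^ k := by
  induction M with
  | zero => simp [gb_zero_right, tri]
  | succ M ih =>
      rw [Finset.prod_range_succ, ih]
      have h1 : ∀ k ∈ Finset.range (M+1),
          gb p (M+1) (k+1) * p ^ tri (k+1) * w ^ (k+1)
            = gb p M (k+1) * p ^ tri (k+1) * w ^ (k+1)
              + gb p M k * p ^ tri k * w ^ k * (w * p ^ M) := by
        intro k hk
        have hk' : k ≤ M := Nat.lt_succ_iff.mp (Finset.mem_range.mp hk)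
        have hexp : p ^ (M - k) * p ^ (tri k + k) = p ^ tri k * p ^ M := by
          rw [← pow_add, ← pow_add]
          congr 1
          omega
        rw [gb_succ, tri_succ]
        linear_combination (gb p M k * w ^ (k+1)) * hexp
      have key : ∑ k ∈ Finset.range (M+2), gb p (M+1) k * p ^ tri k * w ^ k
          = (∑ k ∈ Finset.range (M+1), gb p M k * p ^ tri k * w ^ k)
            + ∑ k ∈ Finset.range (M+1), gb p M k * p ^ tri k * w ^ k * (w * p ^ M) := by
        rw [Finset.sum_range_succ' (fun k => gb p (M+1) k * p ^ tri k * w ^ k) (M+1)]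
        rw [Finset.sum_congr rfl h1, Finset.sum_add_distrib]
        have hA : ∑ k ∈ Finset.range (M+1), gb p M (k+1) * p ^ tri (k+1) * w ^ (k+1)
            = ∑ k ∈ Finset.range M, gb p M (k+1) * p ^ tri (k+1) * w ^ (k+1) := by
          rw [Finset.sum_range_succ, gb_eq_zero p (by omega)]
          ring
        have hC : ∑ k ∈ Finset.range (M+1), gb p M k * p ^ tri k * w ^ k
            = (∑ k ∈ Finset.range M, gb p M (k+1) * p ^ tri (k+1) * w ^ (k+1))
              + gb p M 0 * p ^ tri 0 * w ^ 0 := by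
          rw [Finset.sum_range_succ' (fun k => gb p M k * p ^ tri k * w ^ k) M]
        rw [hA, hC, gb_zero_right, gb_zero_right]
        ring
      rw [key, mul_add, mul_one, Finset.sum_mul]

/-- Partial products of the Euler function. -/
def Pf (p : ℂ) (m : ℕ) : ℂ := ∏ i ∈ Finset.range m, (1 - p ^ (i+1))

lemma Pf_succ (p : ℂ) (m : ℕ) : Pf p (m+1) = Pf p m * (1 - p ^ (m+1)) := by
  rw [Pf, Finset.prod_range_succ, ← Pf]

lemma gb_mul (p : ℂ) : ∀ n, ∀ k, k ≤ n → gb p n k * (Pf p k * Pf p (n - k)) = Pf p n := by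
  intro n
  induction n with
  | zero =>
      intro k hk
      interval_cases k
      simp [gb_zero_right, Pf]
  | succ n ih =>
      intro k hk
      match k with
      | 0 => simp [gb_zero_right, Pf]
      | k+1 =>
        rcases Nat.lt_or_ge k n with h | h
        · have hkn : k + 1 ≤ n := by omega
          have ihk := ih (k+1) hkn
          have ihk' := ih k (by omega)
          have e2 : Pf p (n - k) = Pf p (n - (k+1)) * (1 - p ^ (n-k)) := by
            have hnk : n - k = (n - (k+1)) + 1 := by omega
            rw [hnk, Pf_succ]
          have e3 : Pf p (k+1) = Pf p k * (1 - p ^ (k+1)) := Pf_succ p k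
          have hpow : p ^ (n - k) * p ^ (k+1) = p ^ (n+1) := by
            rw [← pow_add]
            congr 1
            omega
          rw [e3] at ihk
          rw [e2] at ihk'
          rw [gb_succ, Nat.succ_sub_succ, e2, e3, Pf_succ]
          linear_combination (1 - p ^ (n-k)) * ihk + (p ^ (n-k) * (1 - p ^ (k+1))) * ihk'
            - Pf p n * hpow
        · have hk' : k = n := by omega
          subst hk'
          rw [gb_self]
          try simp [Pf]


lemma tri_eq_sum (n : ℕ) : tri n = ∑ m ∈ Finset.range n, m := by
  induction n with
  | zero => rfl
  | succ n ih => rw [Finset.sum_range_succ, ← ih, tri_succ]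

lemma prod_inv_eq {p : ℂ} (hp : p ≠ 0) {z : ℂ} (hz : z ≠ 0) (N : ℕ) :
    ∏ m ∈ Finset.range N, (1 + z⁻¹ * p ^ m)
      = z ^ (-(N:ℤ)) * p ^ tri N * ∏ j ∈ Finset.range N, (1 + z * p ^ (-(j:ℤ))) := by
  have h1 : ∀ m ∈ Finset.range N, 1 + z⁻¹ * p ^ m = z⁻¹ * p ^ m * (1 + z * p ^ (-(m:ℤ))) := by
    intro m _
    rw [zpow_neg, zpow_natCast]
    have hpm : p ^ m ≠ 0 := pow_ne_zero _ hp
    field_simp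
    ring
  rw [Finset.prod_congr rfl h1, Finset.prod_mul_distrib, Finset.prod_mul_distrib,
    Finset.prod_const, Finset.prod_pow_eq_pow_sum, ← tri_eq_sum, Finset.card_range,
    zpow_neg, zpow_natCast, inv_pow]

lemma finite_jtp {p : ℂ} (hp : p ≠ 0) {z : ℂ} (hz : z ≠ 0) (N : ℕ) :
    (∏ m ∈ Finset.range N, (1 + z * p ^ (m+1))) * ∏ m ∈ Finset.range N, (1 + z⁻¹ * p ^ m)
      = ∑ k ∈ Finset.range (2*N+1),
          gb p (2*N) k * (p ^ ((((k:ℤ) - N) * (((k:ℤ) - N) + 1)) / 2) * z ^ ((k:ℤ) - N)) := by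
  set w : ℂ := z * p ^ ((1:ℤ) - N) with hw
  have hsplit : ∏ i ∈ Finset.range (2*N), (1 + w * p ^ i)
      = (∏ j ∈ Finset.range N, (1 + z * p ^ (-(j:ℤ))))
        * ∏ m ∈ Finset.range N, (1 + z * p ^ (m+1)) := by
    have h2N : 2*N = N + N := by ring
    rw [h2N, Finset.prod_range_add]
    congr 1
    · rw [← Finset.prod_range_reflect (fun j => 1 + z * p ^ (-(j:ℤ))) N]
      refine Finset.prod_congr rfl fun i hi => ?_
      have hi' : i < N := Finset.mem_range.mp hi
      congr 1
      rw [hw, mul_assoc, ← zpow_natCast p i, ← zpow_add₀ hp]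
      have hee : (1:ℤ) - ↑N + ↑i = -(↑(N - 1 - i) : ℤ) := by omega
      rw [hee]
    · refine Finset.prod_congr rfl fun i _ => ?_
      congr 1
      rw [hw, mul_assoc, ← zpow_natCast p (N + i), ← zpow_add₀ hp, ← zpow_natCast p (i+1)]
      have hee : (1:ℤ) - ↑N + ↑(N + i) = ((i:ℕ) + 1 : ℤ) := by omega
      rw [hee]
      norm_num
  have hterm : ∀ k : ℕ,
      z ^ (-(N:ℤ)) * p ^ tri N * (gb p (2*N) k * p ^ tri k * w ^ k)
        = gb p (2*N) k * (p ^ ((((k:ℤ) - N) * (((k:ℤ) - N) + 1)) / 2) * z ^ ((k:ℤ) - N)) := by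
    intro k
    have hE : (tri N : ℤ) + (((1:ℤ) - N) * k + tri k)
        = (((k:ℤ) - N) * (((k:ℤ) - N) + 1)) / 2 := by
      have h2 : (2:ℤ) ∣ ((k:ℤ) - N) * (((k:ℤ) - N) + 1) := (Int.even_mul_succ_self _).two_dvd
      obtain ⟨c, hc⟩ := h2
      have hN := tri_cast N
      have hk := tri_cast k
      have hmain : ((tri N : ℤ) + (((1:ℤ) - N) * k + tri k)) * 2 = 2 * c := by
        rw [← hc]
        linear_combination hN + hk
      rw [hc, Int.mul_ediv_cancel_left _ (by norm_num)]
      omega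
    have hzk : z ^ (-(N:ℤ)) * z ^ (k:ℤ) = z ^ ((k:ℤ) - N) := by
      rw [← zpow_add₀ hz]
      congr 1
      ring
    have hpk : (p ^ ((1:ℤ) - N)) ^ k = p ^ (((1:ℤ) - N) * k) := by
      rw [← zpow_natCast (p ^ ((1:ℤ) - N)) k, ← zpow_mul]
    rw [hw, mul_pow, hpk, ← zpow_natCast p (tri N), ← zpow_natCast p (tri k),
      ← zpow_natCast z k, ← hE, zpow_add₀ hp, zpow_add₀ hp, ← hzk]
    ring
  rw [prod_inv_eq hp hz N]
  have hmid : (∏ m ∈ Finset.range N, (1 + z * p ^ (m+1)))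
      * (z ^ (-(N:ℤ)) * p ^ tri N * ∏ j ∈ Finset.range N, (1 + z * p ^ (-(j:ℤ))))
      = z ^ (-(N:ℤ)) * p ^ tri N * ∏ i ∈ Finset.range (2*N), (1 + w * p ^ i) := by
    rw [hsplit]
    ring
  rw [hmid, qbinom p w (2*N), Finset.mul_sum]
  exact Finset.sum_congr rfl fun k _ => hterm k

lemma summable_log {p : ℂ} (hp : ‖p‖ < 1) (w : ℂ) :
    Summable (fun i : ℕ => Complex.log (1 + w * p ^ i)) := by
  have h0 : Tendsto (fun i : ℕ => ‖w * p ^ i‖) atTop (𝓝 0) := by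
    simp only [norm_mul, norm_pow]
    simpa using (tendsto_pow_atTop_nhds_zero_of_lt_one (norm_nonneg p) hp).const_mul ‖w‖
  have hev : ∀ᶠ i in atTop, ‖w * p ^ i‖ ≤ 1/2 := by
    filter_upwards [h0.eventually (eventually_lt_nhds (by norm_num : (0:ℝ) < 1/2))] with i hi
    exact hi.le
  refine Summable.of_norm_bounded_eventually_nat (g := fun i => (3/2) * (‖w‖ * ‖p‖ ^ i))
    (((summable_geometric_of_lt_one (norm_nonneg p) hp).mul_left ‖w‖).mul_left (3/2)) ?_
  filter_upwards [hev] with i hi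
  calc ‖Complex.log (1 + w * p ^ i)‖ ≤ (3/2) * ‖w * p ^ i‖ :=
        Complex.norm_log_one_add_half_le_self hi
    _ = (3/2) * (‖w‖ * ‖p‖ ^ i) := by rw [norm_mul, norm_pow]

lemma hasProd_one_add {p : ℂ} (hp : ‖p‖ < 1) (w : ℂ) :
    HasProd (fun i : ℕ => 1 + w * p ^ i) (∏' i : ℕ, (1 + w * p ^ i)) := by
  by_cases hzero : ∀ i : ℕ, 1 + w * p ^ i ≠ 0
  · exact (Complex.multipliable_of_summable_log (summable_log hp w)).hasProd
  · push_neg at hzero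
    obtain ⟨i₀, hi₀⟩ := hzero
    have h0 : HasProd (fun i : ℕ => 1 + w * p ^ i) 0 := by
      rw [HasProd]
      refine Tendsto.congr' ?_ tendsto_const_nhds
      filter_upwards [eventually_ge_atTop ({i₀} : Finset ℕ)] with s hs
      exact (Finset.prod_eq_zero (hs (Finset.mem_singleton_self i₀)) hi₀).symm
    rw [h0.tprod_eq]
    exact h0

lemma tprod_ne_zero {p : ℂ} (hp : ‖p‖ < 1) (w : ℂ) (h : ∀ i : ℕ, 1 + w * p ^ i ≠ 0) :
    (∏' i : ℕ, (1 + w * p ^ i)) ≠ 0 := by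
  have hh' := Complex.cexp_tsum_eq_tprod (f := fun i => 1 + w * p ^ i)
    (fun i => h i) (summable_log hp w)
  rw [← hh']
  exact Complex.exp_ne_zero _

lemma exists_pos_forall_le {P : ℕ → ℂ} {L : ℂ} (hL : L ≠ 0)
    (h : Tendsto P atTop (𝓝 L)) (h0 : ∀ m, P m ≠ 0) :
    ∃ ε : ℝ, 0 < ε ∧ ∀ m, ε ≤ ‖P m‖ := by
  have hn : Tendsto (fun m => ‖P m‖) atTop (𝓝 ‖L‖) := h.norm
  have hL2 : ‖L‖/2 < ‖L‖ := half_lt_self (norm_pos_iff.mpr hL)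
  obtain ⟨M, hM⟩ := Filter.eventually_atTop.mp (hn.eventually (eventually_gt_nhds hL2))
  have hne : (Finset.range (M+1)).Nonempty := ⟨0, by simp⟩
  refine ⟨min (‖L‖/2) ((Finset.range (M+1)).inf' hne (fun m => ‖P m‖)), ?_, ?_⟩
  · refine lt_min (half_pos (norm_pos_iff.mpr hL)) ?_
    rw [Finset.lt_inf'_iff]
    intro i _
    exact norm_pos_iff.mpr (h0 i)
  · intro m
    rcases le_or_gt m M with hm | hm
    · exact le_trans (min_le_right _ _)
        (Finset.inf'_le _ (Finset.mem_range.mpr (by omega)))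
    · exact le_trans (min_le_left _ _) (hM m (by omega)).le

lemma norm_Pf_le {p : ℂ} (hp : ‖p‖ < 1) (m : ℕ) :
    ‖Pf p m‖ ≤ Real.exp (‖p‖ * (1 - ‖p‖)⁻¹) := by
  have hs0 : Summable (fun i : ℕ => ‖p‖ * ‖p‖ ^ i) :=
    (summable_geometric_of_lt_one (norm_nonneg p) hp).mul_left _
  have hs : Summable (fun i : ℕ => ‖p‖ ^ (i+1)) := by
    simpa [pow_succ, mul_comm] using hs0
  calc ‖Pf p m‖ ≤ ∏ i ∈ Finset.range m, ‖1 - p ^ (i+1)‖ := norm_prod_le _ _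
    _ ≤ ∏ i ∈ Finset.range m, Real.exp (‖p‖ ^ (i+1)) := by
        refine Finset.prod_le_prod (fun i _ => norm_nonneg _) (fun i _ => ?_)
        calc ‖1 - p ^ (i+1)‖ ≤ ‖(1:ℂ)‖ + ‖p ^ (i+1)‖ := norm_sub_le _ _
          _ = ‖p‖ ^ (i+1) + 1 := by rw [norm_one, norm_pow]; ring
          _ ≤ Real.exp (‖p‖ ^ (i+1)) := Real.add_one_le_exp _
    _ = Real.exp (∑ i ∈ Finset.range m, ‖p‖ ^ (i+1)) := by rw [Real.exp_sum]
    _ ≤ Real.exp (‖p‖ * (1 - ‖p‖)⁻¹) := by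
        refine Real.exp_le_exp.mpr ?_
        calc ∑ i ∈ Finset.range m, ‖p‖ ^ (i+1)
            ≤ ∑' i : ℕ, ‖p‖ ^ (i+1) := Summable.sum_le_tsum _ (fun i _ => by positivity) hs
          _ = ‖p‖ * (1 - ‖p‖)⁻¹ := by
              have : (fun i : ℕ => ‖p‖ ^ (i+1)) = fun i : ℕ => ‖p‖ * ‖p‖ ^ i := by
                funext i
                rw [pow_succ, mul_comm]
              rw [this, tsum_mul_left, tsum_geometric_of_lt_one (norm_nonneg p) hp]

lemma summable_of_ratio (u v : ℕ → ℝ) (hu : ∀ n, 0 ≤ u n)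
    (hv : Tendsto (fun n => |v n|) atTop (𝓝 0)) (huv : ∀ n, u (n+1) = u n * v n) :
    Summable u := by
  apply summable_of_ratio_norm_eventually_le (r := 1/2) (by norm_num)
  filter_upwards [hv.eventually (eventually_lt_nhds (by norm_num : (0:ℝ) < 1/2))] with n hn
  rw [Real.norm_of_nonneg (hu _), Real.norm_of_nonneg (hu _), huv n]
  calc u n * v n ≤ u n * |v n| := mul_le_mul_of_nonneg_left (le_abs_self _) (hu n)
    _ ≤ u n * (1/2) := mul_le_mul_of_nonneg_left hn.le (hu n)
    _ = 1/2 * u n := by ring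

lemma summable_theta {a b : ℝ} (ha0 : 0 < a) (ha : a < 1) (hb : 0 < b) :
    Summable (fun d : ℤ => a ^ ((d * (d + 1)) / 2) * b ^ d) := by
  have habs : ∀ c : ℝ, Tendsto (fun n : ℕ => |a ^ (n+1) * c|) atTop (𝓝 0) := by
    intro c
    have h1 : Tendsto (fun n : ℕ => a ^ (n+1) * c) atTop (𝓝 0) := by
      have h := (tendsto_pow_atTop_nhds_zero_of_lt_one ha0.le ha).comp
        (tendsto_add_atTop_nat 1)
      simpa using h.mul_const c
    simpa using h1.abs
  have hz : ∀ n : ℕ, a ^ ((n:ℤ)+1) = a ^ (n+1) := by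
    intro n
    rw [← zpow_natCast a (n+1)]
    norm_num
  apply Summable.of_nat_of_neg_add_one
  · refine summable_of_ratio _ (fun n => a ^ (n+1) * b)
      (fun n => le_of_lt (mul_pos (zpow_pos ha0 _) (zpow_pos hb _))) (habs b) (fun n => ?_)
    have h2 : (2:ℤ) ∣ (n:ℤ) * ((n:ℤ)+1) := (Int.even_mul_succ_self _).two_dvd
    have hr : ((n:ℤ)+1) * (((n:ℤ)+1)+1) = (n:ℤ) * ((n:ℤ)+1) + 2*((n:ℤ)+1) := by ring
    have hE : (((n:ℤ)+1) * (((n:ℤ)+1)+1))/2 = ((n:ℤ) * ((n:ℤ)+1))/2 + ((n:ℤ)+1) := by omega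
    push_cast
    rw [hE, zpow_add₀ (ne_of_gt ha0), zpow_add_one₀ (ne_of_gt hb), hz]
    ring
  · refine summable_of_ratio _ (fun n => a ^ (n+1) * b⁻¹)
      (fun n => le_of_lt (mul_pos (zpow_pos ha0 _) (zpow_pos hb _))) (habs b⁻¹) (fun n => ?_)
    have h2 : (2:ℤ) ∣ (-((n:ℤ)+1)) * ((-((n:ℤ)+1))+1) := (Int.even_mul_succ_self _).two_dvd
    have hr : (-((n:ℤ)+2)) * ((-((n:ℤ)+2))+1)
        = (-((n:ℤ)+1)) * ((-((n:ℤ)+1))+1) + 2*((n:ℤ)+1) := by ring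
    have hE : ((-((n:ℤ)+2)) * ((-((n:ℤ)+2))+1))/2
        = ((-((n:ℤ)+1)) * ((-((n:ℤ)+1))+1))/2 + ((n:ℤ)+1) := by omega
    push_cast
    have hcast : -((n:ℤ)+1+1) = -((n:ℤ)+2) := by ring
    rw [hcast, hE, zpow_add₀ (ne_of_gt ha0), hz,
      show (-((n:ℤ)+2)) = (-((n:ℤ)+1)) + (-1) by ring,
      zpow_add₀ (ne_of_gt hb), zpow_neg_one]
    ring

end JTP

open JTP in
/-- Jacobi triple product identity: for `|q| > 1` and `z ≠ 0`,
`θ_q(z) = (q⁻¹; q⁻¹)_∞ (-q⁻¹ z; q⁻¹)_∞ (-z⁻¹; q⁻¹)_∞`, where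
`(x; p)_∞ = ∏_{i ≥ 0} (1 - x pⁱ)`. -/
theorem jacobi_triple_product (q : ℂ) (hq : 1 < ‖q‖) (z : ℂ) (hz : z ≠ 0) :
    ∑' d : ℤ, q ^ (-(d * (d + 1)) / 2) * z ^ d
      = (∏' i : ℕ, (1 - q⁻¹ * (q⁻¹) ^ i)) * (∏' i : ℕ, (1 - (-(q⁻¹ * z)) * (q⁻¹) ^ i))
        * ∏' i : ℕ, (1 - (-z⁻¹) * (q⁻¹) ^ i) := by
  have hq1 : (1:ℝ) < ‖q‖ := by exact hq
  have hq0 : q ≠ 0 := fun h => by simp [h] at hq1; linarith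
  set p : ℂ := q⁻¹ with hpq
  have hp0 : p ≠ 0 := inv_ne_zero hq0
  have hp1 : ‖p‖ < 1 := by
    rw [hpq, norm_inv]
    exact inv_lt_one_of_one_lt₀ hq1
  have hpn0 : 0 < ‖p‖ := norm_pos_iff.mpr hp0
  have hzn0 : 0 < ‖z‖ := norm_pos_iff.mpr hz
  -- the three infinite products
  have hfacA : ∀ i : ℕ, 1 + (-p) * p ^ i ≠ 0 := by
    intro i h
    have h1 : p ^ (i+1) = 1 := by linear_combination -h
    have h2 : ‖p ^ (i+1)‖ < 1 := by
      rw [norm_pow]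
      exact pow_lt_one₀ (norm_nonneg p) hp1 (Nat.succ_ne_zero i)
    rw [h1, norm_one] at h2
    exact lt_irrefl _ h2
  have hPA := hasProd_one_add hp1 (-p)
  have hPB := hasProd_one_add hp1 (p * z)
  have hPC := hasProd_one_add hp1 z⁻¹
  set Pinf := ∏' i : ℕ, (1 + (-p) * p ^ i) with hPinfdef
  set Binf := ∏' i : ℕ, (1 + (p * z) * p ^ i) with hBinfdef
  set Cinf := ∏' i : ℕ, (1 + z⁻¹ * p ^ i) with hCinfdef
  have hPinf_ne : Pinf ≠ 0 := tprod_ne_zero hp1 (-p) hfacA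
  have hPfeq : ∀ m, Pf p m = ∏ i ∈ Finset.range m, (1 + (-p) * p ^ i) :=
    fun m => Finset.prod_congr rfl fun i _ => by ring
  have htendPf : Tendsto (fun m => Pf p m) atTop (𝓝 Pinf) :=
    (hPA.tendsto_prod_nat).congr fun m => (hPfeq m).symm
  have hPf0 : ∀ m, Pf p m ≠ 0 := fun m => by
    rw [hPfeq m]
    exact Finset.prod_ne_zero_iff.mpr fun i _ => hfacA i
  obtain ⟨ε, hε, hεle⟩ := exists_pos_forall_le hPinf_ne htendPf hPf0
  set C₁ := Real.exp (‖p‖ * (1 - ‖p‖)⁻¹) with hC₁def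
  have hC₁0 : 0 < C₁ := Real.exp_pos _
  have hC₁ : ∀ m, ‖Pf p m‖ ≤ C₁ := norm_Pf_le hp1
  have hgb : ∀ N : ℕ, ∀ k, k ≤ 2*N → ‖gb p (2*N) k‖ ≤ C₁ / (ε * ε) := by
    intro N k hk
    rw [le_div_iff₀ (mul_pos hε hε)]
    have h2 : ‖gb p (2*N) k‖ * (‖Pf p k‖ * ‖Pf p (2*N - k)‖) = ‖Pf p (2*N)‖ := by
      rw [← norm_mul, ← norm_mul, gb_mul p (2*N) k hk]
    calc ‖gb p (2*N) k‖ * (ε * ε)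
        ≤ ‖gb p (2*N) k‖ * (‖Pf p k‖ * ‖Pf p (2*N - k)‖) := by
          refine mul_le_mul_of_nonneg_left ?_ (norm_nonneg _)
          exact mul_le_mul (hεle k) (hεle _) hε.le (norm_nonneg _)
      _ = ‖Pf p (2*N)‖ := h2
      _ ≤ C₁ := hC₁ _
  -- the approximating sequence
  set F : ℕ → ℤ → ℂ := fun N d =>
    if d ∈ Finset.Icc (-(N:ℤ)) (N:ℤ) then
      Pinf * (gb p (2*N) (((N:ℤ) + d).toNat) * (p ^ ((d * (d + 1)) / 2) * z ^ d))
    else 0 with hF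
  have hFS : ∀ N : ℕ, (∑' d : ℤ, F N d)
      = Pinf * ((∏ m ∈ Finset.range N, (1 + z * p ^ (m+1)))
          * ∏ m ∈ Finset.range N, (1 + z⁻¹ * p ^ m)) := by
    intro N
    rw [tsum_eq_sum (s := Finset.Icc (-(N:ℤ)) (N:ℤ))
      (fun d hd => by simp only [hF]; exact if_neg hd)]
    rw [finite_jtp hp0 hz N, Finset.mul_sum]
    refine Finset.sum_nbij' (i := fun d : ℤ => ((N:ℤ) + d).toNat)
      (j := fun k : ℕ => (k:ℤ) - N) ?_ ?_ ?_ ?_ ?_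
    · intro d hd
      have := Finset.mem_Icc.mp hd
      simp only [Finset.mem_range]
      omega
    · intro k hk
      have := Finset.mem_range.mp hk
      simp only [Finset.mem_Icc]
      omega
    · intro d hd
      have := Finset.mem_Icc.mp hd
      show ((((N:ℤ) + d).toNat : ℤ)) - N = d
      omega
    · intro k hk
      have := Finset.mem_range.mp hk
      show ((N:ℤ) + ((k:ℤ) - N)).toNat = k
      omega
    · intro d hd
      have hdm := Finset.mem_Icc.mp hd
      simp only [hF, if_pos hd]
      rw [show ((((N:ℤ) + d).toNat : ℤ)) - (N:ℤ) = d by omega]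
  -- domination
  have hsumb : Summable (fun d : ℤ =>
      (‖Pinf‖ * (C₁ / (ε * ε))) * (‖p‖ ^ ((d * (d + 1)) / 2) * ‖z‖ ^ d)) :=
    (summable_theta hpn0 hp1 hzn0).mul_left _
  have hbound : ∀ (N : ℕ) (d : ℤ), ‖F N d‖
      ≤ (‖Pinf‖ * (C₁ / (ε * ε))) * (‖p‖ ^ ((d * (d + 1)) / 2) * ‖z‖ ^ d) := by
    intro N d
    have hXpos : 0 < ‖p‖ ^ ((d * (d + 1)) / 2) * ‖z‖ ^ d :=
      mul_pos (zpow_pos hpn0 _) (zpow_pos hzn0 _)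
    simp only [hF]
    split_ifs with hd
    · have hdm := Finset.mem_Icc.mp hd
      rw [norm_mul, norm_mul, norm_mul, norm_zpow, norm_zpow]
      have hgb' : ‖gb p (2*N) (((N:ℤ) + d).toNat)‖ ≤ C₁ / (ε * ε) := hgb N _ (by omega)
      calc ‖Pinf‖ * (‖gb p (2*N) (((N:ℤ) + d).toNat)‖
            * (‖p‖ ^ ((d * (d + 1)) / 2) * ‖z‖ ^ d))
          ≤ ‖Pinf‖ * ((C₁ / (ε * ε)) * (‖p‖ ^ ((d * (d + 1)) / 2) * ‖z‖ ^ d)) := by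
            refine mul_le_mul_of_nonneg_left ?_ (norm_nonneg _)
            exact mul_le_mul_of_nonneg_right hgb' hXpos.le
        _ = (‖Pinf‖ * (C₁ / (ε * ε))) * (‖p‖ ^ ((d * (d + 1)) / 2) * ‖z‖ ^ d) := by ring
    · rw [norm_zero]
      exact mul_nonneg
        (mul_nonneg (norm_nonneg _) (div_nonneg hC₁0.le (mul_pos hε hε).le)) hXpos.le
  -- pointwise convergence
  have hlim : ∀ d : ℤ, Tendsto (fun N => F N d) atTop
      (𝓝 (p ^ ((d * (d + 1)) / 2) * z ^ d)) := by
    intro d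
    have t2N : Tendsto (fun N : ℕ => 2*N) atTop atTop :=
      tendsto_atTop_mono (fun n => by simp only [id_eq]; omega) tendsto_id
    have t1 : Tendsto (fun N : ℕ => Pf p (2*N)) atTop (𝓝 Pinf) := htendPf.comp t2N
    have hm1 : Tendsto (fun N : ℕ => ((N:ℤ) + d).toNat) atTop atTop :=
      tendsto_atTop_mono (fun N => by omega) (tendsto_sub_atTop_nat d.natAbs)
    have hm2 : Tendsto (fun N : ℕ => 2*N - ((N:ℤ) + d).toNat) atTop atTop :=
      tendsto_atTop_mono (fun N => by omega) (tendsto_sub_atTop_nat d.natAbs)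
    have hconst : Tendsto (fun N : ℕ => Pinf * (Pf p (2*N)
        / (Pf p (((N:ℤ) + d).toNat) * Pf p (2*N - ((N:ℤ) + d).toNat)))) atTop
        (𝓝 (Pinf * (Pinf / (Pinf * Pinf)))) :=
      tendsto_const_nhds.mul (t1.div ((htendPf.comp hm1).mul (htendPf.comp hm2))
        (mul_ne_zero hPinf_ne hPinf_ne))
    have hval : Pinf * (Pinf / (Pinf * Pinf)) = 1 := by field_simp
    have heq : ∀ᶠ N : ℕ in atTop,
        Pinf * (Pf p (2*N)
          / (Pf p (((N:ℤ) + d).toNat) * Pf p (2*N - ((N:ℤ) + d).toNat)))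
          * (p ^ ((d * (d + 1)) / 2) * z ^ d) = F N d := by
      filter_upwards [eventually_ge_atTop d.natAbs] with N hN
      have hmem : d ∈ Finset.Icc (-(N:ℤ)) (N:ℤ) := Finset.mem_Icc.mpr (by omega)
      have htn : (((N:ℤ) + d).toNat) ≤ 2*N := by omega
      have hgbeq : gb p (2*N) (((N:ℤ) + d).toNat)
          = Pf p (2*N) / (Pf p (((N:ℤ) + d).toNat) * Pf p (2*N - ((N:ℤ) + d).toNat)) := by
        rw [eq_div_iff (mul_ne_zero (hPf0 _) (hPf0 _))]
        exact gb_mul p (2*N) _ htn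
      simp only [hF, if_pos hmem]
      rw [hgbeq]
      ring
    have hfin := (hconst.mul_const (p ^ ((d * (d + 1)) / 2) * z ^ d)).congr' heq
    rwa [hval, one_mul] at hfin
  have htan := tendsto_tsum_of_dominated_convergence hsumb hlim
    (Eventually.of_forall fun N => hbound N)
  -- limit of the product side
  have hBt : Tendsto (fun N => ∏ m ∈ Finset.range N, (1 + z * p ^ (m+1))) atTop (𝓝 Binf) :=
    (hPB.tendsto_prod_nat).congr fun N => Finset.prod_congr rfl fun m _ => by ring
  have hCt : Tendsto (fun N => ∏ m ∈ Finset.range N, (1 + z⁻¹ * p ^ m)) atTop (𝓝 Cinf) :=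
    hPC.tendsto_prod_nat
  have hL1 : Tendsto (fun N => Pinf * ((∏ m ∈ Finset.range N, (1 + z * p ^ (m+1)))
      * ∏ m ∈ Finset.range N, (1 + z⁻¹ * p ^ m))) atTop (𝓝 (Pinf * (Binf * Cinf))) :=
    tendsto_const_nhds.mul (hBt.mul hCt)
  have hkey : (∑' d : ℤ, p ^ ((d * (d + 1)) / 2) * z ^ d) = Pinf * (Binf * Cinf) :=
    tendsto_nhds_unique (htan.congr hFS) hL1
  have hqd : ∀ d : ℤ, q ^ (-(d * (d + 1)) / 2) = p ^ ((d * (d + 1)) / 2) := by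
    intro d
    have h2 : (2:ℤ) ∣ d * (d + 1) := (Int.even_mul_succ_self d).two_dvd
    have hneg : (-(d * (d + 1))) / 2 = -((d * (d + 1)) / 2) := by omega
    rw [hneg, zpow_neg, ← inv_zpow, ← hpq]
  have hA : (∏' i : ℕ, (1 - p * p ^ i)) = Pinf := tprod_congr fun i => by ring
  have hB : (∏' i : ℕ, (1 - (-(p * z)) * p ^ i)) = Binf := tprod_congr fun i => by ring
  have hC : (∏' i : ℕ, (1 - (-z⁻¹) * p ^ i)) = Cinf := tprod_congr fun i => by ring
  calc (∑' d : ℤ, q ^ (-(d * (d + 1)) / 2) * z ^ d)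
      = ∑' d : ℤ, p ^ ((d * (d + 1)) / 2) * z ^ d := tsum_congr fun d => by rw [hqd d]
    _ = Pinf * (Binf * Cinf) := hkey
    _ = (∏' i : ℕ, (1 - p * p ^ i)) * (∏' i : ℕ, (1 - (-(p * z)) * p ^ i))
        * ∏' i : ℕ, (1 - (-z⁻¹) * p ^ i) := by rw [hA, hB, hC]; ring
end
end

section
/- Let |q| > 1 with q not a root of unity, and l ∈ ℤ_{≥0}. Define f_{1,d} = q^{l d(d-1)/2}/∏_{k=1}^d(1−q^k)² and suppose F₂ = Σ_{d≥0} f_{2,d} z^d satisfies the recursion f_{2,0} = 0 and f_{2,d} = [q^{l(d-1)}/(1−q^d)²] f_{2,d-1} + [q^{l d(d-1)/2}/∏_{k=1}^d(1−q^k)²]·(2q^d/(1−q^d) + l) for d ≥ 1. Then the pair (F₁, F₂) with F₁ = Σ f_{1,d} z^d satisfies the identity [2σ_q(σ_q − 1) − l z σ_q^l] F₁ = [z σ_q^l − (1 − σ_q)²] F₂ as formal power series. -/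
open Finset PowerSeries

private lemma aux_alg (A w P s c L : ℂ) (hP : P ≠ 0) (hu : 1 - s ≠ 0) :
    2 * (s * s * (A * w / (P * (1 - s) ^ 2)) - s * (A * w / (P * (1 - s) ^ 2)))
      - L * (w * (A / P))
    = w * c - (w / (1 - s) ^ 2 * c + A * w / (P * (1 - s) ^ 2) * (2 * s / (1 - s) + L)
        - 2 * (s * (w / (1 - s) ^ 2 * c + A * w / (P * (1 - s) ^ 2) * (2 * s / (1 - s) + L)))
        + s * s * (w / (1 - s) ^ 2 * c + A * w / (P * (1 - s) ^ 2) * (2 * s / (1 - s) + L))) := by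
  obtain ⟨u, h⟩ : ∃ u, (1 : ℂ) - s = u := ⟨_, rfl⟩
  have hu2 : u ≠ 0 := h ▸ hu
  have hs : s = 1 - u := by rw [← h]; ring
  have hT : ∀ T : ℂ, T - 2 * (s * T) + s * s * T = u ^ 2 * T := by
    intro T; rw [hs]; ring
  have key1 : u ^ 2 * (w / u ^ 2 * c + A * w / (P * u ^ 2) * (2 * s / u + L))
      = w * c + A * w * (2 * s + L * u) / (P * u) := by
    field_simp [hu2, hP]
  have key2 : 2 * (s * s * (A * w / (P * u ^ 2)) - s * (A * w / (P * u ^ 2))) - L * (w * (A / P))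
      = -(A * w * (2 * s + L * u) / (P * u)) := by
    rw [hs]
    field_simp [hu2, hP]
    ring
  rw [h] at *
  rw [key2, hT, key1]
  ring

/-- With `f_{1,d} = q^{l d(d-1)/2}/∏_{k=1}^d (1-q^k)²` and `f_{2,d}` defined by the stated
recursion, the pair `(F₁, F₂)` satisfies `[2σ_q(σ_q - 1) - l z σ_q^l] F₁ =
[z σ_q^l - (1 - σ_q)²] F₂` as formal power series. -/
theorem level_l_second_solution_identity (q : ℂ) (hq : 1 < ‖q‖)
    (hq' : ∀ k : ℕ, 1 ≤ k → q ^ k ≠ 1) (l : ℕ)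
    (f1 f2 : ℕ → ℂ)
    (hf1 : ∀ d, f1 d = q ^ (l * (d * (d - 1) / 2)) / ∏ k ∈ Finset.range d, (1 - q ^ (k + 1)) ^ 2)
    (hf20 : f2 0 = 0)
    (hf2 : ∀ d : ℕ, 1 ≤ d →
      f2 d = q ^ (l * (d - 1)) / (1 - q ^ d) ^ 2 * f2 (d - 1)
        + q ^ (l * (d * (d - 1) / 2)) / (∏ k ∈ Finset.range d, (1 - q ^ (k + 1)) ^ 2)
          * (2 * q ^ d / (1 - q ^ d) + l)) :
    2 * ((PowerSeries.mk fun d => q ^ (2 * d) * f1 d) - (PowerSeries.mk fun d => q ^ d * f1 d))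
        - PowerSeries.C (l : ℂ) * (PowerSeries.X * PowerSeries.mk fun d => q ^ (l * d) * f1 d)
      = PowerSeries.X * (PowerSeries.mk fun d => q ^ (l * d) * f2 d)
        - (PowerSeries.mk f2 - 2 * (PowerSeries.mk fun d => q ^ d * f2 d)
            + (PowerSeries.mk fun d => q ^ (2 * d) * f2 d)) := by
  have hP : ∀ d : ℕ, (∏ k ∈ Finset.range d, (1 - q ^ (k + 1)) ^ 2) ≠ 0 := by
    intro d
    refine Finset.prod_ne_zero_iff.2 fun k _ => pow_ne_zero _ ?_
    have := hq' (k + 1) (Nat.le_add_left 1 k)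
    intro h; exact this (sub_eq_zero.mp h).symm
  rw [show (2 : ℂ⟦X⟧) = PowerSeries.C 2 from (map_ofNat PowerSeries.C 2).symm]
  ext d
  simp only [map_sub, map_add, PowerSeries.coeff_C_mul, PowerSeries.coeff_mk]
  cases d with
  | zero =>
    simp [hf1, hf20]
  | succ n =>
    simp only [PowerSeries.coeff_succ_X_mul, PowerSeries.coeff_mk]
    have hq1 : (1 - q ^ (n + 1)) ≠ 0 := by
      have := hq' (n + 1) (Nat.le_add_left 1 n)
      intro h; exact this (sub_eq_zero.mp h).symm
    have hexp : (n + 1) * n / 2 = n * (n - 1) / 2 + n := by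
      cases n with
      | zero => rfl
      | succ m =>
        simp only [Nat.add_sub_cancel]
        have h1 : 2 ∣ (m + 1) * m := by
          rw [Nat.mul_comm]; exact (Nat.even_mul_succ_self m).two_dvd
        have h3 : (m + 1 + 1) * (m + 1) = (m + 1) * m + 2 * (m + 1) := by ring
        omega
    have hqe : q ^ (l * ((n + 1) * n / 2)) = q ^ (l * (n * (n - 1) / 2)) * q ^ (l * n) := by
      rw [← pow_add, ← Nat.mul_add, hexp]
    have hf1s := hf1 (n + 1)
    have hf2s := hf2 (n + 1) (Nat.le_add_left 1 n)
    simp only [Nat.add_sub_cancel, hqe, Finset.prod_range_succ] at hf1s hf2s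
    have h2m : q ^ (2 * (n + 1)) = q ^ (n + 1) * q ^ (n + 1) := by
      rw [two_mul, pow_add]
    rw [h2m, hf1s, hf2s, hf1 n]
    have hPn := hP n
    exact aux_alg _ _ _ _ _ _ hPn hq1
end

section
/- Let |q| > 1, let a₀(z), …, a_n(z) be holomorphic functions at 0 with radius of convergence > R for some R > 0, a_n ≡ 1, and let P₀(x) = Σ_{k=0}^n a_k(0) x^k. Assume P₀(1) = 0 and P₀(q^k) ≠ 0 for all integers k ≥ 1. Then there is a unique formal power series solution f = 1 + f₁z + f₂z² + ⋯ ∈ ℂ[[z]] of Σ_{k=0}^n a_k(z) f(q^k z) = 0, and this series has positive radius of convergence. -/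
open Finset

noncomputable def fsol (P : ℕ → ℂ → ℂ) (q : ℂ) (m : ℕ) : ℂ :=
  if m = 0 then 1 else
    -(P 0 (q ^ m))⁻¹ * ∑ i ∈ (Finset.range m).attach,
      P (m - i.1) (q ^ (i.1 : ℕ)) * fsol P q i.1
termination_by m
decreasing_by exact Finset.mem_range.mp i.2

lemma fsol_zero (P : ℕ → ℂ → ℂ) (q : ℂ) : fsol P q 0 = 1 := by rw [fsol]; simp

lemma fsol_succ (P : ℕ → ℂ → ℂ) (q : ℂ) (m : ℕ) (hm : m ≠ 0) :
    fsol P q m = -(P 0 (q ^ m))⁻¹ * ∑ i ∈ Finset.range m,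
      P (m - i) (q ^ i) * fsol P q i := by
  rw [fsol]
  simp only [hm, if_false]
  rw [← Finset.sum_attach (Finset.range m) (fun i => P (m - i) (q ^ i) * fsol P q i)]

lemma fsol_eq (P : ℕ → ℂ → ℂ) (q : ℂ) (hP1 : P 0 1 = 0)
    (hPk : ∀ m : ℕ, 1 ≤ m → P 0 (q ^ m) ≠ 0) (m : ℕ) :
    ∑ i ∈ Finset.range (m + 1), P (m - i) (q ^ i) * fsol P q i = 0 := by
  rcases Nat.eq_zero_or_pos m with hm | hm
  · subst hm
    simp [fsol_zero, hP1]
  · rw [Finset.sum_range_succ, Nat.sub_self, fsol_succ P q m (by omega)]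
    field_simp [hPk m hm]
    ring

lemma fsol_unique (P : ℕ → ℂ → ℂ) (q : ℂ)
    (hPk : ∀ m : ℕ, 1 ≤ m → P 0 (q ^ m) ≠ 0) (g : ℕ → ℂ) (hg0 : g 0 = 1)
    (hg : ∀ m : ℕ, ∑ i ∈ Finset.range (m + 1), P (m - i) (q ^ i) * g i = 0)
    (hf : ∀ m : ℕ, ∑ i ∈ Finset.range (m + 1), P (m - i) (q ^ i) * fsol P q i = 0) :
    g = fsol P q := by
  funext m
  induction m using Nat.strong_induction_on with
  | _ m ih =>
    rcases Nat.eq_zero_or_pos m with hm | hm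
    · subst hm; rw [hg0, fsol_zero]
    · have h1 := hg m
      have h2 := hf m
      rw [Finset.sum_range_succ, Nat.sub_self] at h1 h2
      have heq : ∑ i ∈ Finset.range m, P (m - i) (q ^ i) * g i
          = ∑ i ∈ Finset.range m, P (m - i) (q ^ i) * fsol P q i :=
        Finset.sum_congr rfl fun i hi => by rw [ih i (Finset.mem_range.mp hi)]
      rw [heq] at h1
      have := hPk m hm
      have h3 : P 0 (q ^ m) * g m = P 0 (q ^ m) * fsol P q m := by linear_combination h1 - h2
      exact mul_left_cancel₀ this h3

lemma geom_bound (t : ℝ) (h0 : 0 ≤ t) (h1 : t < 1) (m : ℕ) :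
    ∑ j ∈ Finset.range m, t ^ j ≤ (1 - t)⁻¹ := by
  calc ∑ j ∈ Finset.range m, t ^ j ≤ ∑' j : ℕ, t ^ j :=
        Summable.sum_le_tsum _ (fun i _ => pow_nonneg h0 i) (summable_geometric_of_lt_one h0 h1)
    _ = (1 - t)⁻¹ := tsum_geometric_of_lt_one h0 h1

lemma growth_bound (c s : ℝ) (hc : 0 < c) (hs : 0 < s) (f : ℕ → ℝ)
    (h0 : f 0 ≤ 1)
    (hf : ∀ m, 1 ≤ m → f m ≤ c * ∑ i ∈ Finset.range m, s ^ (m - i) * f i) :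
    ∀ m, f m ≤ (s * (1 + c)) ^ m := by
  set B := s * (1 + c) with hB
  have hBpos : 0 < B := by positivity
  set t := (1 + c)⁻¹ with ht
  have ht0 : 0 < t := by positivity
  have ht1 : t < 1 := by
    rw [ht, inv_lt_one_iff₀]; right; linarith
  have hsB : s = B * t := by
    rw [hB, ht]; field_simp
  intro m
  induction m using Nat.strong_induction_on with
  | _ m ih =>
    rcases Nat.eq_zero_or_pos m with hm | hm
    · subst hm; simpa using h0
    · have step : ∀ i ∈ Finset.range m, s ^ (m - i) * f i ≤ B ^ m * t ^ (m - i) := by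
        intro i hi
        have hi' : i < m := Finset.mem_range.mp hi
        have h1 : s ^ (m - i) * f i ≤ s ^ (m - i) * B ^ i :=
          mul_le_mul_of_nonneg_left (ih i hi') (by positivity)
        have h2 : s ^ (m - i) * B ^ i = B ^ m * t ^ (m - i) := by
          rw [hsB, mul_pow, mul_right_comm, ← pow_add]
          congr 2
          omega
        linarith
      have hsum : ∑ i ∈ Finset.range m, s ^ (m - i) * f i
          ≤ B ^ m * ∑ i ∈ Finset.range m, t ^ (m - i) := by
        rw [Finset.mul_sum]
        exact Finset.sum_le_sum step
      have hre : ∑ i ∈ Finset.range m, t ^ (m - i) = t * ∑ j ∈ Finset.range m, t ^ j := by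
        rw [← Finset.sum_range_reflect (fun i => t ^ (m - i)) m, Finset.mul_sum]
        refine Finset.sum_congr rfl fun j hj => ?_
        have : m - (m - 1 - j) = j + 1 := by
          have := Finset.mem_range.mp hj; omega
        rw [this, pow_succ, mul_comm]
      have hgeo : t * ∑ j ∈ Finset.range m, t ^ j ≤ t * (1 - t)⁻¹ :=
        mul_le_mul_of_nonneg_left (geom_bound t ht0.le ht1 m) ht0.le
      have hti : t * (1 - t)⁻¹ = c⁻¹ := by
        have h1c : (0:ℝ) < 1 + c := by positivity
        rw [ht]
        have h2 : 1 - (1 + c)⁻¹ = c / (1 + c) := by field_simp; ring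
        rw [h2]
        field_simp
      calc f m ≤ c * ∑ i ∈ Finset.range m, s ^ (m - i) * f i := hf m hm
        _ ≤ c * (B ^ m * (t * (1 - t)⁻¹)) := by
            refine mul_le_mul_of_nonneg_left ?_ hc.le
            calc ∑ i ∈ Finset.range m, s ^ (m - i) * f i
                ≤ B ^ m * ∑ i ∈ Finset.range m, t ^ (m - i) := hsum
              _ = B ^ m * (t * ∑ j ∈ Finset.range m, t ^ j) := by rw [hre]
              _ ≤ B ^ m * (t * (1 - t)⁻¹) :=
                  mul_le_mul_of_nonneg_left hgeo (by positivity)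
        _ = B ^ m := by rw [hti]; field_simp

lemma eq_rewrite {n : ℕ} (a : Fin (n + 1) → ℕ → ℂ) (q : ℂ) (f : ℕ → ℂ) (m : ℕ) :
    ∑ k : Fin (n + 1), ∑ j ∈ Finset.range (m + 1),
      a k j * q ^ ((k : ℕ) * (m - j)) * f (m - j)
      = ∑ i ∈ Finset.range (m + 1), (∑ k : Fin (n + 1), a k (m - i) * (q ^ i) ^ (k : ℕ)) * f i := by
  rw [Finset.sum_comm]
  rw [← Finset.sum_range_reflect
    (fun i => (∑ k : Fin (n + 1), a k (m - i) * (q ^ i) ^ (k : ℕ)) * f i) (m + 1)]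
  refine Finset.sum_congr rfl fun j hj => ?_
  have hj' : j ≤ m := Nat.lt_succ_iff.mp (Finset.mem_range.mp hj)
  have h1 : m + 1 - 1 - j = m - j := by omega
  have h2 : m - (m - j) = j := by omega
  rw [h1, h2, Finset.sum_mul]
  refine Finset.sum_congr rfl fun k _ => ?_
  rw [mul_comm (k : ℕ) (m - j), pow_mul]

/-- Let `|q| > 1`, let `a₀(z), …, a_n(z)` be power series with radius of convergence `> R > 0`,
`a_n ≡ 1`, and `P₀(x) = ∑ a_k(0) x^k` with `P₀(1) = 0` and `P₀(q^k) ≠ 0` for all `k ≥ 1`.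
Then there is a unique formal power series solution `f = 1 + f₁ z + ⋯` of
`∑_k a_k(z) f(q^k z) = 0` (interpreted coefficientwise), and it has positive radius of
convergence. -/
theorem convergent_solution_regular_slope_zero (q : ℂ) (hq : 1 < ‖q‖)
    (n : ℕ) (R : ℝ) (hR : 0 < R)
    (a : Fin (n + 1) → ℕ → ℂ)
    (han : ∀ j : ℕ, a (Fin.last n) j = if j = 0 then 1 else 0)
    (hconv : ∀ k : Fin (n + 1), ∃ R' : ℝ, R < R' ∧ Summable fun j => ‖a k j‖ * R' ^ j)
    (hP1 : ∑ k : Fin (n + 1), a k 0 * 1 ^ (k : ℕ) = 0)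
    (hPk : ∀ m : ℕ, 1 ≤ m → ∑ k : Fin (n + 1), a k 0 * (q ^ m) ^ (k : ℕ) ≠ 0) :
    ∃ f : ℕ → ℂ,
      (f 0 = 1 ∧
        ∀ m : ℕ, ∑ k : Fin (n + 1), ∑ j ∈ Finset.range (m + 1),
          a k j * q ^ ((k : ℕ) * (m - j)) * f (m - j) = 0) ∧
      (∀ g : ℕ → ℂ,
        (g 0 = 1 ∧
          ∀ m : ℕ, ∑ k : Fin (n + 1), ∑ j ∈ Finset.range (m + 1),
            a k j * q ^ ((k : ℕ) * (m - j)) * g (m - j) = 0) → g = f) ∧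
      ∃ r : ℝ, 0 < r ∧ Summable fun m : ℕ => ‖f m‖ * r ^ m := by
  -- the case n = 0 is contradictory
  rcases Nat.eq_zero_or_pos n with hn0 | hn
  · subst hn0
    rw [Fin.sum_univ_one, one_pow, mul_one] at hP1
    have h0 : (0 : Fin 1) = Fin.last 0 := Subsingleton.elim _ _
    rw [h0, han 0] at hP1
    simp at hP1
  set P : ℕ → ℂ → ℂ := fun j x => ∑ k : Fin (n + 1), a k j * x ^ (k : ℕ) with hPdef
  set Q : ℝ := ‖q‖ with hQdef
  have hQ1 : (1:ℝ) < Q := hq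
  have hQ0 : (0:ℝ) < Q := lt_trans one_pos hQ1
  have hP01 : P 0 1 = 0 := hP1
  have hP0k : ∀ m : ℕ, 1 ≤ m → P 0 (q ^ m) ≠ 0 := fun m hm => hPk m hm
  obtain ⟨f, hf0, hfeq, huniq⟩ : ∃ f : ℕ → ℂ, f 0 = 1 ∧
      (∀ m : ℕ, ∑ i ∈ Finset.range (m + 1), P (m - i) (q ^ i) * f i = 0) ∧
      (∀ g : ℕ → ℂ, g 0 = 1 →
        (∀ m : ℕ, ∑ i ∈ Finset.range (m + 1), P (m - i) (q ^ i) * g i = 0) → g = f) :=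
    ⟨fsol P q, fsol_zero P q, fsol_eq P q hP01 hP0k,
      fun g hg0 hg => fsol_unique P q hP0k g hg0 hg (fsol_eq P q hP01 hP0k)⟩
  refine ⟨f, ⟨hf0, fun m => by rw [eq_rewrite a q f m]; exact hfeq m⟩,
    fun g ⟨hg0, hg⟩ => huniq g hg0
      (fun m => by rw [← eq_rewrite a q g m]; exact hg m), ?_⟩
  -- Lower bound A for ‖P 0 (q ^ m)‖
  set C : ℝ := ∑ k : Fin n, ‖a k.castSucc 0‖ with hCdef
  have hC0 : 0 ≤ C := Finset.sum_nonneg fun k _ => norm_nonneg _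
  obtain ⟨M, hM⟩ := pow_unbounded_of_one_lt (2 * C) hQ1
  have habsqm : ∀ m k : ℕ, ‖((q : ℂ) ^ m) ^ k‖ = Q ^ (m * k) := by
    intro m k
    rw [norm_pow, norm_pow, ← pow_mul]
  have claim1 : ∀ m : ℕ, M ≤ m → (1/2) * Q ^ (m * n) ≤ ‖P 0 (q ^ m)‖ := by
    intro m hm
    have hsplit : P 0 (q ^ m)
        = (∑ k : Fin n, a k.castSucc 0 * (q ^ m) ^ (k : ℕ)) + (q ^ m) ^ n := by
      show (∑ k : Fin (n + 1), a k 0 * (q ^ m) ^ (k : ℕ)) = _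
      rw [Fin.sum_univ_castSucc]
      simp [han 0]
    have hrest : ‖∑ k : Fin n, a k.castSucc 0 * (q ^ m) ^ (k : ℕ)‖ ≤ C * Q ^ (m * (n-1)) := by
      calc ‖∑ k : Fin n, a k.castSucc 0 * (q ^ m) ^ (k : ℕ)‖
          ≤ ∑ k : Fin n, ‖a k.castSucc 0 * (q ^ m) ^ (k : ℕ)‖ := norm_sum_le _ _
        _ ≤ ∑ k : Fin n, ‖a k.castSucc 0‖ * Q ^ (m * (n-1)) := by
            refine Finset.sum_le_sum fun k _ => ?_
            rw [norm_mul]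
            refine mul_le_mul_of_nonneg_left ?_ (norm_nonneg _)
            rw [habsqm m (k : ℕ)]
            exact pow_le_pow_right₀ hQ1.le (Nat.mul_le_mul_left m (by omega))
        _ = C * Q ^ (m * (n-1)) := by rw [← Finset.sum_mul]
    have hmain : ‖((q:ℂ) ^ m) ^ n‖ = Q ^ (m * n) := habsqm m n
    have hlow : Q ^ (m * n) - C * Q ^ (m * (n-1)) ≤ ‖P 0 (q ^ m)‖ := by
      have := norm_sub_norm_le (((q:ℂ) ^ m) ^ n)
        (-(∑ k : Fin n, a k.castSucc 0 * (q ^ m) ^ (k : ℕ)))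
      rw [sub_neg_eq_add, norm_neg, hmain] at this
      have h2 : (((q:ℂ) ^ m) ^ n) + ∑ k : Fin n, a k.castSucc 0 * (q ^ m) ^ (k : ℕ)
          = P 0 (q ^ m) := by rw [hsplit]; ring
      rw [h2] at this
      linarith
    have hCQ : C * Q ^ (m * (n-1)) ≤ (1/2) * Q ^ (m * n) := by
      have hQm : 2 * C ≤ Q ^ m := le_trans hM.le (pow_le_pow_right₀ hQ1.le hm)
      have hexp : m * n = m * (n - 1) + m := by
        have h : n - 1 + 1 = n := by omega
        calc m * n = m * (n - 1 + 1) := by rw [h]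
          _ = m * (n-1) + m := by ring
      rw [hexp, pow_add]
      calc C * Q ^ (m * (n-1)) ≤ (Q ^ m / 2) * Q ^ (m * (n-1)) := by
            refine mul_le_mul_of_nonneg_right ?_ (by positivity)
            linarith
        _ = 1/2 * (Q ^ (m * (n-1)) * Q ^ m) := by ring
    linarith
  -- finite min for small m
  classical
  obtain ⟨A, hApos, hA⟩ : ∃ A : ℝ, 0 < A ∧
      ∀ m : ℕ, 1 ≤ m → A * Q ^ (m * n) ≤ ‖P 0 (q ^ m)‖ := by
    set S : Finset ℝ := insert (1/2 : ℝ)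
      ((Finset.Ico 1 M).image fun m => ‖P 0 (q ^ m)‖ / Q ^ (m * n)) with hSdef
    have hSne : S.Nonempty := ⟨1/2, Finset.mem_insert_self _ _⟩
    set A : ℝ := S.min' hSne with hAdef
    refine ⟨A, ?_, ?_⟩
    ·
      have hmem := S.min'_mem hSne
      rw [← hAdef] at hmem
      rw [hSdef] at hmem
      rcases Finset.mem_insert.mp hmem with h | h
      · rw [h]; norm_num
      · obtain ⟨m, hmIco, hmeq⟩ := Finset.mem_image.mp h
        obtain ⟨hm1, _⟩ := Finset.mem_Ico.mp hmIco
        rw [← hmeq]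
        have hnz : (0:ℝ) < ‖P 0 (q ^ m)‖ := norm_pos_iff.mpr (hP0k m hm1)
        exact div_pos hnz (by positivity)
    intro m hm1
    rcases lt_or_ge m M with hmM | hmM
    · have hmem : ‖P 0 (q ^ m)‖ / Q ^ (m * n) ∈ S := by
        rw [hSdef]
        exact Finset.mem_insert_of_mem
          (Finset.mem_image.mpr ⟨m, Finset.mem_Ico.mpr ⟨hm1, hmM⟩, rfl⟩)
      have hle := S.min'_le _ hmem
      rw [← hAdef] at hle
      have hQpow : (0:ℝ) < Q ^ (m * n) := by positivity
      calc A * Q ^ (m * n) ≤ (‖P 0 (q ^ m)‖ / Q ^ (m * n)) * Q ^ (m * n) :=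
            mul_le_mul_of_nonneg_right hle hQpow.le
        _ = ‖P 0 (q ^ m)‖ := div_mul_cancel₀ _ hQpow.ne'
    · have hle := S.min'_le (1/2 : ℝ) (Finset.mem_insert_self _ _)
      rw [← hAdef] at hle
      have hQpow : (0:ℝ) < Q ^ (m * n) := by positivity
      calc A * Q ^ (m * n) ≤ (1/2) * Q ^ (m * n) :=
            mul_le_mul_of_nonneg_right hle hQpow.le
        _ ≤ ‖P 0 (q ^ m)‖ := claim1 m hmM
  -- Upper bound D for coefficients
  have hDk : ∀ k : Fin (n+1), ∃ Dk : ℝ, ∀ j, ‖a k j‖ * R ^ j ≤ Dk := by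
    intro k
    obtain ⟨R', hRR', hsum⟩ := hconv k
    refine ⟨∑' j, ‖a k j‖ * R' ^ j, fun j => ?_⟩
    have h1 : ‖a k j‖ * R ^ j ≤ ‖a k j‖ * R' ^ j := by
      refine mul_le_mul_of_nonneg_left ?_ (norm_nonneg _)
      exact pow_le_pow_left₀ hR.le hRR'.le j
    refine le_trans h1 (Summable.le_tsum hsum j fun i _ => ?_)
    have hR' : 0 < R' := lt_trans hR hRR'
    positivity
  choose Dk hDkspec using hDk
  obtain ⟨D, hD0, haD⟩ : ∃ D : ℝ, 0 < D ∧
      ∀ k : Fin (n+1), ∀ j : ℕ, ‖a k j‖ ≤ D * R⁻¹ ^ j := by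
    refine ⟨1 + ∑ k : Fin (n+1), max 0 (Dk k), ?_, ?_⟩
    · have : 0 ≤ ∑ k : Fin (n+1), max 0 (Dk k) :=
        Finset.sum_nonneg fun k _ => le_max_left 0 _
      linarith
    intro k j
    have hDk_le : Dk k ≤ 1 + ∑ k : Fin (n+1), max 0 (Dk k) := by
      have h1 : Dk k ≤ max 0 (Dk k) := le_max_right _ _
      have h2 : max 0 (Dk k) ≤ ∑ k : Fin (n+1), max 0 (Dk k) :=
        Finset.single_le_sum (fun k _ => le_max_left 0 (Dk k)) (Finset.mem_univ k)
      linarith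
    have h1 : ‖a k j‖ * R ^ j ≤ 1 + ∑ k : Fin (n+1), max 0 (Dk k) :=
      le_trans (hDkspec k j) hDk_le
    have hRp : (0:ℝ) < R ^ j := by positivity
    have h2 : ‖a k j‖ ≤ (1 + ∑ k : Fin (n+1), max 0 (Dk k)) / R ^ j := (le_div_iff₀ hRp).mpr h1
    rw [div_eq_mul_inv, ← inv_pow] at h2
    exact h2
  have hPbound : ∀ j i : ℕ, ‖P j (q ^ i)‖ ≤ (n+1) * D * R⁻¹ ^ j * Q ^ (i * n) := by
    intro j i
    calc ‖P j (q ^ i)‖ ≤ ∑ k : Fin (n+1), ‖a k j * (q ^ i) ^ (k:ℕ)‖ := norm_sum_le _ _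
      _ ≤ ∑ _k : Fin (n+1), D * R⁻¹ ^ j * Q ^ (i * n) := by
          refine Finset.sum_le_sum fun k _ => ?_
          rw [norm_mul]
          have h1 : ‖((q:ℂ) ^ i) ^ (k:ℕ)‖ ≤ Q ^ (i * n) := by
            rw [habsqm i (k : ℕ)]
            exact pow_le_pow_right₀ hQ1.le (Nat.mul_le_mul_left i (Fin.is_le k))
          exact mul_le_mul (haD k j) h1 (norm_nonneg _) (by positivity)
      _ = (n+1) * D * R⁻¹ ^ j * Q ^ (i * n) := by
          rw [Finset.sum_const, Finset.card_univ, Fintype.card_fin]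
          ring
  -- key recursive estimate
  set c : ℝ := (n+1) * D / A with hcdef
  have hc0 : 0 < c := by positivity
  set s : ℝ := (R * Q ^ n)⁻¹ with hsdef
  have hs0 : 0 < s := by positivity
  have hrec : ∀ m : ℕ, 1 ≤ m → ‖f m‖ ≤ c * ∑ i ∈ Finset.range m, s ^ (m - i) * ‖f i‖ := by
    intro m hm
    have h1 := hfeq m
    rw [Finset.sum_range_succ, Nat.sub_self] at h1
    have h2 : P 0 (q ^ m) * f m = -∑ i ∈ Finset.range m, P (m - i) (q ^ i) * f i := by
      linear_combination h1
    have h3 : ‖P 0 (q ^ m)‖ * ‖f m‖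
        = ‖∑ i ∈ Finset.range m, P (m - i) (q ^ i) * f i‖ := by
      rw [← norm_mul, h2, norm_neg]
    have hnormP : A * Q ^ (m * n) ≤ ‖P 0 (q ^ m)‖ := hA m hm
    have hAQ : (0:ℝ) < A * Q ^ (m * n) := by positivity
    have hsumb : ‖∑ i ∈ Finset.range m, P (m - i) (q ^ i) * f i‖
        ≤ ∑ i ∈ Finset.range m, (n+1) * D * R⁻¹ ^ (m - i) * Q ^ (i * n) * ‖f i‖ := by
      refine le_trans (norm_sum_le _ _) (Finset.sum_le_sum fun i _ => ?_)
      rw [norm_mul]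
      exact mul_le_mul_of_nonneg_right (hPbound (m - i) i) (norm_nonneg _)
    have h4 : A * Q ^ (m * n) * ‖f m‖
        ≤ ∑ i ∈ Finset.range m, (n+1) * D * R⁻¹ ^ (m - i) * Q ^ (i * n) * ‖f i‖ := by
      calc A * Q ^ (m * n) * ‖f m‖ ≤ ‖P 0 (q ^ m)‖ * ‖f m‖ :=
            mul_le_mul_of_nonneg_right hnormP (norm_nonneg _)
        _ = ‖∑ i ∈ Finset.range m, P (m - i) (q ^ i) * f i‖ := h3
        _ ≤ _ := hsumb
    have h5 : ‖f m‖ ≤ (A * Q ^ (m * n))⁻¹ *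
        ∑ i ∈ Finset.range m, (n+1) * D * R⁻¹ ^ (m - i) * Q ^ (i * n) * ‖f i‖ := by
      rw [← div_eq_inv_mul, le_div_iff₀ hAQ, mul_comm]
      exact h4
    have hkey : ∀ i : ℕ, i < m →
        (A * Q ^ (m * n))⁻¹ * ((n+1) * D * R⁻¹ ^ (m - i) * Q ^ (i * n)) = c * s ^ (m - i) := by
      intro i hi
      have hexp : Q ^ (m * n) = Q ^ (i * n) * (Q ^ n) ^ (m - i) := by
        rw [← pow_mul, ← pow_add]
        congr 1
        have hii : i + (m - i) = m := by omega
        calc m * n = (i + (m - i)) * n := by rw [hii]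
          _ = i * n + n * (m - i) := by ring
      rw [hexp, hsdef, hcdef]
      have hQn : (0:ℝ) < Q ^ n := by positivity
      have hQin : (0:ℝ) < Q ^ (i * n) := by positivity
      have hRne : R ≠ 0 := hR.ne'
      have hQne : Q ≠ 0 := hQ0.ne'
      rw [inv_pow]
      field_simp
      ring_nf
      rw [mul_right_comm (Q ^ _) (R ^ _), ← mul_pow Q Q⁻¹, mul_inv_cancel₀ hQne, one_pow, one_mul,
        ← mul_pow R R⁻¹, mul_inv_cancel₀ hRne, one_pow]
    calc ‖f m‖ ≤ (A * Q ^ (m * n))⁻¹ *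
          ∑ i ∈ Finset.range m, (n+1) * D * R⁻¹ ^ (m - i) * Q ^ (i * n) * ‖f i‖ := h5
      _ = ∑ i ∈ Finset.range m, (A * Q ^ (m * n))⁻¹ *
            ((n+1) * D * R⁻¹ ^ (m - i) * Q ^ (i * n)) * ‖f i‖ := by
          rw [Finset.mul_sum]
          exact Finset.sum_congr rfl fun i _ => by ring
      _ = ∑ i ∈ Finset.range m, c * (s ^ (m - i) * ‖f i‖) := by
          refine Finset.sum_congr rfl fun i hi => ?_
          rw [hkey i (Finset.mem_range.mp hi)]
          ring
      _ = c * ∑ i ∈ Finset.range m, s ^ (m - i) * ‖f i‖ := by rw [← Finset.mul_sum]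
  have hf0' : ‖f 0‖ ≤ 1 := by rw [hf0]; norm_num
  have hBnd : ∀ m, ‖f m‖ ≤ (s * (1 + c)) ^ m :=
    growth_bound c s hc0 hs0 (fun m => ‖f m‖) hf0' hrec
  set B : ℝ := s * (1 + c) with hBdef
  have hB0 : 0 < B := by positivity
  refine ⟨(2 * B)⁻¹, by positivity, ?_⟩
  refine Summable.of_nonneg_of_le (fun m => by positivity)
    (fun m => ?_) (summable_geometric_of_lt_one (by norm_num : (0:ℝ) ≤ 1/2) (by norm_num))
  have hBr : B * (2 * B)⁻¹ = 1/2 := by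
    field_simp
  calc ‖f m‖ * ((2 * B)⁻¹) ^ m ≤ B ^ m * ((2 * B)⁻¹) ^ m :=
        mul_le_mul_of_nonneg_right (hBnd m) (by positivity)
    _ = (B * (2 * B)⁻¹) ^ m := (mul_pow B ((2 * B)⁻¹) m).symm
    _ = (1/2) ^ m := by rw [hBr]
end

section
/- Let |q| > 1, n ≥ 1, and suppose b₀, d₀ ∈ ℂ are such that the characteristic polynomial x² + b₀x + d₀ has a root c with c ≠ 0 and q^{2m}c² + q^m c b₀ + d₀ ≠ 0 for all integers m ≥ 1. Given convergent power series b(z) = Σ b_m z^m, d(z) = Σ d_m z^m with b(0) = b₀, d(0) = d₀, there exists a unique formal power series F(z) = Σ_{m≥0} f_m z^m with f₀ = 1 satisfying c² F(q²z) + b(z)·c·F(qz) + d(z)·F(z) = 0, with coefficients given recursively by f_m = −[Σ_{k=0}^{m-1} (c q^k b_{m-k} + d_{m-k}) f_k] / (q^{2m}c² + q^m c b₀ + d₀) for m ≥ 1. -/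
open Finset

noncomputable def frAux (q c : ℂ) (b d : ℕ → ℂ) : ℕ → ℂ
  | m =>
    if h : m = 0 then 1 else
      -(∑ k ∈ (Finset.range m).attach,
          (c * q ^ (k : ℕ) * b (m - k) + d (m - k)) * frAux q c b d k)
        / (q ^ (2 * m) * c ^ 2 + q ^ m * c * b 0 + d 0)
  termination_by m => m
  decreasing_by exact Finset.mem_range.mp k.2

lemma frAux_zero (q c : ℂ) (b d : ℕ → ℂ) : frAux q c b d 0 = 1 := by
  rw [frAux]; simp

lemma frAux_pos (q c : ℂ) (b d : ℕ → ℂ) (m : ℕ) (hm : m ≠ 0) :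
    frAux q c b d m =
      -(∑ k ∈ Finset.range m, (c * q ^ k * b (m - k) + d (m - k)) * frAux q c b d k)
        / (q ^ (2 * m) * c ^ 2 + q ^ m * c * b 0 + d 0) := by
  rw [frAux]
  rw [dif_neg hm, Finset.sum_attach (Finset.range m)
    (fun k => (c * q ^ k * b (m - k) + d (m - k)) * frAux q c b d k)]

/-- Frobenius construction for a degree-2 q-difference equation: if `c ≠ 0` is a root of
`x² + b₀ x + d₀` which is non-resonant (`q^{2m}c² + q^m c b₀ + d₀ ≠ 0` for `m ≥ 1`), then
there is a unique formal power series `F = ∑ f_m z^m`, `f₀ = 1`, with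
`c² F(q²z) + b(z) c F(qz) + d(z) F(z) = 0`, and its coefficients satisfy the stated
recursion. -/
theorem frobenius_degree_two (q : ℂ) (hq : 1 < ‖q‖)
    (n : ℕ) (hn : 1 ≤ n) (c : ℂ) (hc : c ≠ 0)
    (b d : ℕ → ℂ)
    (hbconv : ∃ r : ℝ, 0 < r ∧ Summable fun m : ℕ => ‖b m‖ * r ^ m)
    (hdconv : ∃ r : ℝ, 0 < r ∧ Summable fun m : ℕ => ‖d m‖ * r ^ m)
    (hroot : c ^ 2 + b 0 * c + d 0 = 0)
    (hnr : ∀ m : ℕ, 1 ≤ m → q ^ (2 * m) * c ^ 2 + q ^ m * c * b 0 + d 0 ≠ 0) :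
    ∃ f : ℕ → ℂ,
      (f 0 = 1 ∧
        ∀ m : ℕ, c ^ 2 * q ^ (2 * m) * f m
          + ∑ k ∈ Finset.range (m + 1), (c * q ^ k * b (m - k) + d (m - k)) * f k = 0) ∧
      (∀ g : ℕ → ℂ,
        (g 0 = 1 ∧
          ∀ m : ℕ, c ^ 2 * q ^ (2 * m) * g m
            + ∑ k ∈ Finset.range (m + 1), (c * q ^ k * b (m - k) + d (m - k)) * g k = 0)
          → g = f) ∧
      ∀ m : ℕ, 1 ≤ m →
        f m = -(∑ k ∈ Finset.range m, (c * q ^ k * b (m - k) + d (m - k)) * f k)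
          / (q ^ (2 * m) * c ^ 2 + q ^ m * c * b 0 + d 0) := by
  set f : ℕ → ℂ := frAux q c b d with hf
  have hrec : ∀ m : ℕ, 1 ≤ m →
      f m = -(∑ k ∈ Finset.range m, (c * q ^ k * b (m - k) + d (m - k)) * f k)
        / (q ^ (2 * m) * c ^ 2 + q ^ m * c * b 0 + d 0) := fun m hm =>
    frAux_pos q c b d m (Nat.one_le_iff_ne_zero.mp hm)
  have hf0 : f 0 = 1 := frAux_zero q c b d
  have heq : ∀ m : ℕ, c ^ 2 * q ^ (2 * m) * f m
      + ∑ k ∈ Finset.range (m + 1), (c * q ^ k * b (m - k) + d (m - k)) * f k = 0 := by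
    intro m
    rcases Nat.eq_zero_or_pos m with rfl | hm
    · simp [hf0]; linear_combination hroot
    · have hD := hnr m hm
      rw [Finset.sum_range_succ]
      have : f m * (q ^ (2 * m) * c ^ 2 + q ^ m * c * b 0 + d 0)
          = -(∑ k ∈ Finset.range m, (c * q ^ k * b (m - k) + d (m - k)) * f k) := by
        rw [hrec m hm, div_mul_cancel₀ _ hD]
      simp only [Nat.sub_self]
      linear_combination this
  refine ⟨f, ⟨hf0, heq⟩, ?_, hrec⟩
  intro g ⟨hg0, hgeq⟩
  funext m
  induction m using Nat.strong_induction_on with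
  | _ m ih =>
    rcases Nat.eq_zero_or_pos m with rfl | hm
    · rw [hg0, hf0]
    · have hD := hnr m hm
      have h1 := hgeq m
      rw [Finset.sum_range_succ] at h1
      have hsum : ∑ k ∈ Finset.range m, (c * q ^ k * b (m - k) + d (m - k)) * g k
          = ∑ k ∈ Finset.range m, (c * q ^ k * b (m - k) + d (m - k)) * f k := by
        refine Finset.sum_congr rfl fun k hk => ?_
        rw [ih k (Finset.mem_range.mp hk)]
      rw [hrec m hm, eq_div_iff hD]
      simp only [Nat.sub_self] at h1
      rw [← hsum]
      linear_combination h1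
end
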